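/- (Corollary, Homogeneous Setting, part 2: Geometric Convergence.) Suppose the service rates are homogeneous, i.e. ν_i = ν > 0 for all i = 1,…,N. Then there exist constants φ with 0 < φ < 1 and δ with 0 < δ < ∞ such that for all k ≥ 1, all 0 ≤ n ≤ N and all m ∈ C_n, |p_n^{k+1}(m) − p_n^{k}(m)| ≤ φ^k·δ; in particular lim_{k→∞} |p_n^{k+1}(m) − p_n^{k}(m)| = 0. -/

import Mathlib

/-!
With all service rates equal to `c`, every non-full state is left upward at total rate `λ` and
every state of layer `n` downward at rate `n c`. Inductively in `k` and `n`, every layer sum of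
the iterates is `1`; then the inner iteration is stationary after one sweep, and `p_n^k` is an
explicit linear image of `(p_{n-1}^k, p_{n+1}^{k-1})` whose layer sum is the convex combination
`α_n Σ p_{n-1}^k + (1 - α_n) Σ p_{n+1}^{k-1}`, `α_n = n c / (λ + n c)`. Hence the `ℓ¹`-distances
`d_n^k` between successive iterates satisfy `d_n^k ≤ α_n d_{n-1}^k + (1 - α_n) d_{n+1}^{k-1}`
with `d_0^k = d_N^k = 0`, and sweeping upward through the layers shows that one outer iteration
contracts them by the factor `1 - ∏_{0 < j < N} α_j`.
-/

open Finset Filter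

/-- Number of busy units in state `B`. -/
def wt {N : ℕ} (B : Fin N → Bool) : ℕ := (Finset.univ.filter fun i => B i = true).card

/-- The layer `C_n`: states with exactly `n` busy units. -/
def layer (N n : ℕ) : Finset (Fin N → Bool) := Finset.univ.filter fun B => wt B = n

/-- The full state: all units busy. -/
def fullState (N : ℕ) : Fin N → Bool := fun _ => true

/-- Unit `i` is the most preferred free unit at node `j` in state `l`
(ranks are given by the permutation `ζ j`). -/
def dispatched {N J : ℕ} (ζ : Fin J → (Fin N ≃ Fin N)) (l : Fin N → Bool) (j : Fin J)
    (i : Fin N) : Prop :=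
  l i = false ∧ ∀ h : Fin N, (h : ℕ) < ((ζ j).symm i : ℕ) → l ((ζ j) h) = true

instance {N J : ℕ} (ζ : Fin J → (Fin N ≃ Fin N)) (l : Fin N → Bool) (j : Fin J) (i : Fin N) :
    Decidable (dispatched ζ l j i) := by
  unfold dispatched; infer_instance

/-- Upward transition rate `λ_{lm}`: nonzero only if `m` arises from `l` by flipping
one coordinate `i` from free to busy, in which case it is `λ` times the total demand
fraction of the nodes dispatching unit `i` in state `l`. -/
noncomputable def upRate {N J : ℕ} (lam : ℝ) (f : Fin J → ℝ) (ζ : Fin J → (Fin N ≃ Fin N))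
    (l m : Fin N → Bool) : ℝ :=
  ∑ i : Fin N,
    if l i = false ∧ m = Function.update l i true then
      lam * ∑ j : Fin J, if dispatched ζ l j i then f j else 0
    else 0

/-- Downward transition rate `μ_{lm}`: nonzero only if `m` arises from `l` by flipping
one coordinate `i` from busy to free, in which case it is `ν i`. -/
noncomputable def downRate {N : ℕ} (ν : Fin N → ℝ) (l m : Fin N → Bool) : ℝ :=
  ∑ i : Fin N, if l i = true ∧ m = Function.update l i false then ν i else 0

/-- Total upward rate `λ_m = Σ_l λ_{ml}` out of state `m`. -/
noncomputable def totalUp {N J : ℕ} (lam : ℝ) (f : Fin J → ℝ) (ζ : Fin J → (Fin N ≃ Fin N))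
    (m : Fin N → Bool) : ℝ :=
  ∑ l : Fin N → Bool, upRate lam f ζ m l

/-- Total service completion rate `μ_m = Σ_{i busy} ν i` out of state `m`. -/
noncomputable def totalDown {N : ℕ} (ν : Fin N → ℝ) (m : Fin N → Bool) : ℝ :=
  ∑ i : Fin N, if m i = true then ν i else 0

/-- `C^m_n`: the states of layer `n` at Hamming distance 1 from `m`. -/
def adjLayer {N : ℕ} (n : ℕ) (m : Fin N → Bool) : Finset (Fin N → Bool) :=
  (layer N n).filter fun l => (Finset.univ.filter fun i => l i ≠ m i).card = 1

/-- `λ^k(n) = Σ_{m ∈ C_n} p_n^k(m) · λ_m`. -/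
noncomputable def lamI {N J : ℕ} (lam : ℝ) (f : Fin J → ℝ) (ζ : Fin J → (Fin N ≃ Fin N))
    (pI : ℕ → ℕ → (Fin N → Bool) → ℝ) (k n : ℕ) : ℝ :=
  ∑ m ∈ layer N n, pI k n m * totalUp lam f ζ m

/-- `μ^k(n) = Σ_{m ∈ C_n} p_n^k(m) · μ_m`. -/
noncomputable def muI {N : ℕ} (ν : Fin N → ℝ) (pI : ℕ → ℕ → (Fin N → Bool) → ℝ) (k n : ℕ) : ℝ :=
  ∑ m ∈ layer N n, pI k n m * totalDown ν m

/-- `μ^{k,r}(n) = Σ_{m ∈ C_n} p_n^{k,r}(m) · μ_m`. -/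
noncomputable def muR {N : ℕ} (ν : Fin N → ℝ) (pR : ℕ → ℕ → ℕ → (Fin N → Bool) → ℝ)
    (k n r : ℕ) : ℝ :=
  ∑ m ∈ layer N n, pR k n r m * totalDown ν m

/-- The iterates of the CPU (Conditional Probability Update) algorithm:
`pI k n m` is the converged outer iterate `p_n^k(m)` and `pR k n r m` is the inner
iterate `p_n^{k,r}(m)`.  The converged value `p_n^k` is by definition the limit of
the inner iterates as `r → ∞`. -/
def IsCPUIterates {N J : ℕ} (lam : ℝ) (f : Fin J → ℝ) (ζ : Fin J → (Fin N ≃ Fin N))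
    (ν : Fin N → ℝ) (pI : ℕ → ℕ → (Fin N → Bool) → ℝ)
    (pR : ℕ → ℕ → ℕ → (Fin N → Bool) → ℝ) : Prop :=
  (∀ n ≤ N, ∀ m ∈ layer N n, pI 0 n m = 0) ∧
  (∀ n ≤ N, ∀ m ∈ layer N n, pI 1 n m = 1 / (N.choose n : ℝ)) ∧
  (∀ n ≤ N, ∀ r, 1 ≤ r → ∀ m ∈ layer N n, pR 1 n r m = 1 / (N.choose n : ℝ)) ∧
  (∀ k, 1 ≤ k → ∀ m ∈ layer N 0, pI k 0 m = 1) ∧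
  (∀ k, 1 ≤ k → ∀ m ∈ layer N N, pI k N m = 1) ∧
  (∀ k, 2 ≤ k → ∀ r, ∀ m ∈ layer N 0, pR k 0 r m = 1) ∧
  (∀ k, 2 ≤ k → ∀ r, ∀ m ∈ layer N N, pR k N r m = 1) ∧
  (∀ k, 2 ≤ k → ∀ n, 1 ≤ n → n ≤ N - 1 → ∀ m ∈ layer N n, pR k n 0 m = pI (k - 1) n m) ∧
  (∀ k, 2 ≤ k → ∀ n, 1 ≤ n → n ≤ N - 1 → ∀ r, 1 ≤ r → ∀ m ∈ layer N n,
    pR k n r m =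
      (∑ l ∈ layer N (n - 1),
        pI k (n - 1) l * (muR ν pR k n (r - 1) / lamI lam f ζ pI k (n - 1)) *
          (upRate lam f ζ l m / (totalUp lam f ζ m + totalDown ν m))) +
      (∑ l ∈ adjLayer (n + 1) m,
        pI (k - 1) (n + 1) l * (lamI lam f ζ pI (k - 1) n / muI ν pI (k - 1) (n + 1)) *
          (downRate ν l m / (totalUp lam f ζ m + totalDown ν m)))) ∧
  (∀ k, 2 ≤ k → ∀ n, 1 ≤ n → n ≤ N - 1 → ∀ m ∈ layer N n,
    Filter.Tendsto (fun r => pR k n r m) Filter.atTop (nhds (pI k n m)))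

section States

variable {N : ℕ}

lemma mem_layer {B : Fin N → Bool} {n : ℕ} : B ∈ layer N n ↔ wt B = n := by
  simp [layer]

lemma wt_update_true {l : Fin N → Bool} {i : Fin N} (h : l i = false) :
    wt (Function.update l i true) = wt l + 1 := by
  have hset : (univ.filter fun x => Function.update l i true x = true)
      = insert i (univ.filter fun x => l x = true) := by
    ext x
    by_cases hx : x = i <;> simp [Function.update_apply, hx, h]
  rw [wt, hset, card_insert_of_notMem (by simp [h]), wt]

lemma wt_update_false {l : Fin N → Bool} {i : Fin N} (h : l i = true) :
    wt (Function.update l i false) + 1 = wt l := by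
  rw [← wt_update_true (Function.update_self i false l), Function.update_idem, ← h,
    Function.update_eq_self]

lemma exists_false_of_wt_lt {B : Fin N → Bool} (h : wt B < N) : ∃ i, B i = false := by
  by_contra! hB
  have : (univ.filter fun i => B i = true) = univ :=
    filter_true_of_mem fun i _ => by simpa using hB i
  simp [wt, this] at h

lemma card_layer (n : ℕ) : #(layer N n) = N.choose n := by
  rw [show N.choose n = #(powersetCard n (univ : Finset (Fin N))) by simp]
  refine card_nbij' (fun B => univ.filter fun i => B i = true) (fun s i => decide (i ∈ s))
    ?_ ?_ ?_ ?_
  · intro B hB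
    simpa [mem_powersetCard, wt] using mem_layer.mp hB
  · intro s hs
    simpa [mem_layer, wt] using (mem_powersetCard.mp hs).2
  · intro B _
    funext i
    simp
  · intro s _
    ext i
    simp

lemma sum_layer_of_forall_eq {n : ℕ} {p : (Fin N → Bool) → ℝ} {x : ℝ}
    (h : ∀ m ∈ layer N n, p m = x) : ∑ m ∈ layer N n, p m = N.choose n * x := by
  rw [sum_congr rfl h, sum_const, card_layer, nsmul_eq_mul]

end States

section Rates

variable {N J : ℕ} {lam : ℝ} {f : Fin J → ℝ} {ζ : Fin J → (Fin N ≃ Fin N)} {ν : Fin N → ℝ}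

lemma dispatched_unique {l : Fin N → Bool} {j : Fin J} {i i' : Fin N}
    (hi : dispatched ζ l j i) (hi' : dispatched ζ l j i') : i = i' := by
  have rank_not_lt {a b : Fin N} (ha : dispatched ζ l j a) (hb : dispatched ζ l j b) :
      ¬ (ζ j).symm a < (ζ j).symm b := fun hlt => by
    simpa [ha.1] using hb.2 _ hlt
  rcases lt_trichotomy ((ζ j).symm i) ((ζ j).symm i') with h | h | h
  · exact absurd h (rank_not_lt hi hi')
  · exact (ζ j).symm.injective h
  · exact absurd h (rank_not_lt hi' hi)

lemma exists_dispatched {l : Fin N → Bool} (hl : ∃ i, l i = false) (j : Fin J) :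
    ∃ i, dispatched ζ l j i := by
  obtain ⟨i, hi⟩ := hl
  set free := univ.filter fun h => l (ζ j h) = false
  have hfree : free.Nonempty := ⟨(ζ j).symm i, by simp [free, hi]⟩
  refine ⟨ζ j (free.min' hfree), (mem_filter.mp (free.min'_mem hfree)).2, fun h hlt => ?_⟩
  by_contra hh
  rw [Equiv.symm_apply_apply] at hlt
  exact absurd (free.min'_le h (by simpa [free] using hh)) (not_le.mpr hlt)

lemma sum_ite_dispatched {l : Fin N → Bool} (hl : ∃ i, l i = false) (j : Fin J) :
    ∑ i, (if dispatched ζ l j i then f j else 0) = f j := by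
  obtain ⟨i, hi⟩ := exists_dispatched (ζ := ζ) hl j
  rw [sum_eq_single_of_mem i (mem_univ i)
    fun i' _ hi' => if_neg fun h => hi' (dispatched_unique h hi), if_pos hi]

lemma totalUp_eq (hfsum : ∑ j, f j = 1) {l : Fin N → Bool} (hl : ∃ i, l i = false) :
    totalUp lam f ζ l = lam := by
  have hrow (i : Fin N) : ∑ m : Fin N → Bool, (if l i = false ∧ m = Function.update l i true
      then lam * ∑ j, (if dispatched ζ l j i then f j else 0) else 0)
      = lam * ∑ j, (if dispatched ζ l j i then f j else 0) := by
    by_cases hli : l i = false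
    · simp [hli]
    · have (j : Fin J) : ¬ dispatched ζ l j i := fun h => hli h.1
      simp [hli, this]
  simp only [totalUp, upRate]
  rw [sum_comm, sum_congr rfl fun i _ => hrow i, ← mul_sum, sum_comm,
    sum_congr rfl fun j _ => sum_ite_dispatched hl j, hfsum, mul_one]

lemma sum_downRate (l : Fin N → Bool) : ∑ m, downRate ν l m = totalDown ν l := by
  simp only [downRate, totalDown]
  rw [sum_comm]
  refine sum_congr rfl fun i _ => ?_
  by_cases hli : l i = true <;> simp [hli]

lemma upRate_eq_zero {l m : Fin N → Bool} (h : wt m ≠ wt l + 1) : upRate lam f ζ l m = 0 :=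
  sum_eq_zero fun _ _ => if_neg fun ⟨hli, hm⟩ => h (hm ▸ wt_update_true hli)

lemma downRate_eq_zero {l m : Fin N → Bool} (h : wt m + 1 ≠ wt l) : downRate ν l m = 0 :=
  sum_eq_zero fun _ _ => if_neg fun ⟨hli, hm⟩ => h (hm ▸ wt_update_false hli)

lemma downRate_eq_zero_of_notMem_adjLayer {l m : Fin N → Bool} {n : ℕ} (hl : l ∈ layer N n)
    (h : l ∉ adjLayer n m) : downRate ν l m = 0 := by
  refine sum_eq_zero fun i _ => if_neg fun ⟨hli, hm⟩ => h (mem_filter.mpr ⟨hl, ?_⟩)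
  have : (univ.filter fun x => l x ≠ m x) = {i} := by
    ext x
    by_cases hx : x = i <;> simp [hm, Function.update_apply, hx, hli]
  rw [this, card_singleton]

lemma sum_upRate_layer (hfsum : ∑ j, f j = 1) {l : Fin N → Bool} {n : ℕ} (hl : l ∈ layer N n)
    (hn : n < N) : ∑ m ∈ layer N (n + 1), upRate lam f ζ l m = lam := by
  rw [mem_layer] at hl
  refine (sum_subset (subset_univ _) fun m _ hm => upRate_eq_zero ?_).trans
    (totalUp_eq hfsum (exists_false_of_wt_lt (hl ▸ hn)))
  rw [mem_layer] at hm
  omega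

lemma sum_downRate_layer {l : Fin N → Bool} {n : ℕ} (hl : l ∈ layer N (n + 1)) :
    ∑ m ∈ layer N n, downRate ν l m = totalDown ν l := by
  rw [mem_layer] at hl
  refine (sum_subset (subset_univ _) fun m _ hm => downRate_eq_zero ?_).trans (sum_downRate l)
  rw [mem_layer] at hm
  omega

lemma sum_adjLayer_mul_downRate (n : ℕ) (m : Fin N → Bool) (g : (Fin N → Bool) → ℝ) :
    ∑ l ∈ adjLayer n m, g l * downRate ν l m = ∑ l ∈ layer N n, g l * downRate ν l m :=
  sum_subset (filter_subset _ _) fun l hl hl' => by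
    rw [downRate_eq_zero_of_notMem_adjLayer hl hl', mul_zero]

lemma upRate_nonneg (hlam : 0 ≤ lam) (hf : ∀ j, 0 ≤ f j) (l m : Fin N → Bool) :
    0 ≤ upRate lam f ζ l m :=
  sum_nonneg fun _ _ => by
    split_ifs
    exacts [mul_nonneg hlam (sum_nonneg fun j _ => by split_ifs <;> simp [hf j]), le_rfl]

lemma downRate_nonneg (hν : ∀ i, 0 ≤ ν i) (l m : Fin N → Bool) : 0 ≤ downRate ν l m :=
  sum_nonneg fun i _ => by split_ifs <;> simp [hν i]

lemma sum_layer_sum_mul_upRate (hfsum : ∑ j, f j = 1) {n : ℕ} (hn : n < N)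
    (g : (Fin N → Bool) → ℝ) :
    ∑ m ∈ layer N (n + 1), ∑ l ∈ layer N n, g l * upRate lam f ζ l m
      = lam * ∑ l ∈ layer N n, g l := by
  rw [sum_comm, mul_sum]
  refine sum_congr rfl fun l hl => ?_
  rw [← mul_sum, sum_upRate_layer hfsum hl hn, mul_comm]

lemma sum_layer_sum_adjLayer_mul_downRate (n : ℕ) (g : (Fin N → Bool) → ℝ) :
    ∑ m ∈ layer N n, ∑ l ∈ adjLayer (n + 1) m, g l * downRate ν l m
      = ∑ l ∈ layer N (n + 1), g l * totalDown ν l := by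
  simp_rw [sum_adjLayer_mul_downRate]
  rw [sum_comm]
  refine sum_congr rfl fun l hl => ?_
  rw [← mul_sum, sum_downRate_layer hl]

lemma totalDown_const (c : ℝ) (m : Fin N → Bool) : totalDown (fun _ => c) m = wt m * c := by
  rw [totalDown, ← sum_filter, sum_const, nsmul_eq_mul, wt]

end Rates

section Homogeneous

variable {N J : ℕ} {lam c : ℝ} {f : Fin J → ℝ} {ζ : Fin J → (Fin N ≃ Fin N)}

lemma sum_mul_totalUp (hfsum : ∑ j, f j = 1) {n : ℕ} (hn : n < N) (p : (Fin N → Bool) → ℝ) :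
    ∑ m ∈ layer N n, p m * totalUp lam f ζ m = (∑ m ∈ layer N n, p m) * lam := by
  rw [sum_mul]
  refine sum_congr rfl fun m hm => ?_
  rw [totalUp_eq hfsum (exists_false_of_wt_lt (mem_layer.mp hm ▸ hn))]

lemma sum_mul_totalDown_const (n : ℕ) (p : (Fin N → Bool) → ℝ) :
    ∑ m ∈ layer N n, p m * totalDown (fun _ => c) m = (∑ m ∈ layer N n, p m) * (n * c) := by
  rw [sum_mul]
  refine sum_congr rfl fun m hm => ?_
  rw [totalDown_const, mem_layer.mp hm]

/-- The probability that a state of layer `n` is left by a service completion rather than an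
arrival, when every unit serves at rate `c`. -/
noncomputable def serviceProb (lam c : ℝ) (n : ℕ) : ℝ := n * c / (lam + n * c)

lemma one_sub_serviceProb (hlam : 0 < lam) (hc : 0 ≤ c) (n : ℕ) :
    1 - serviceProb lam c n = lam / (lam + n * c) := by
  rw [serviceProb, eq_div_iff (by positivity)]
  field_simp
  ring

lemma serviceProb_nonneg (hlam : 0 ≤ lam) (hc : 0 ≤ c) (n : ℕ) :
    0 ≤ serviceProb lam c n := by
  unfold serviceProb
  positivity

lemma serviceProb_lt_one (hlam : 0 < lam) (hc : 0 ≤ c) (n : ℕ) :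
    serviceProb lam c n < 1 := by
  rw [serviceProb, div_lt_one (by positivity)]
  linarith

lemma prod_serviceProb_pos (hlam : 0 < lam) (hc : 0 < c) (n : ℕ) :
    0 < ∏ j ∈ Icc 1 n, serviceProb lam c j :=
  prod_pos fun j hj => by
    have : (0 : ℝ) < j := by exact_mod_cast (mem_Icc.mp hj).1
    unfold serviceProb
    positivity

lemma prod_serviceProb_lt_one (hlam : 0 < lam) (hc : 0 ≤ c) {n : ℕ} (hn : 1 ≤ n) :
    ∏ j ∈ Icc 1 n, serviceProb lam c j < 1 :=
  calc ∏ j ∈ Icc 1 n, serviceProb lam c j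
      ≤ ∏ j ∈ {1}, serviceProb lam c j :=
        prod_le_prod_of_subset_of_le_one (by simpa using hn)
          (fun j _ => serviceProb_nonneg hlam.le hc j)
          (fun j _ _ => (serviceProb_lt_one hlam hc j).le)
    _ < 1 := by simpa using serviceProb_lt_one hlam hc 1

/-- The right-hand side of the inner CPU recursion at layer `n` once all layer sums are `1`:
then `μ^{k,r-1}(n) = n c`, `λ^k(n-1) = λ^{k-1}(n) = λ`, `μ^{k-1}(n+1) = (n+1) c`
and `λ_m + μ_m = λ + n c`, so it no longer depends on `r`. -/
noncomputable def cpuUpdate (lam c : ℝ) (f : Fin J → ℝ) (ζ : Fin J → (Fin N ≃ Fin N)) (n : ℕ)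
    (g h : (Fin N → Bool) → ℝ) (m : Fin N → Bool) : ℝ :=
  (∑ l ∈ layer N (n - 1),
      g l * ((n : ℝ) * c / lam) * (upRate lam f ζ l m / (lam + n * c))) +
    ∑ l ∈ adjLayer (n + 1) m,
      h l * (lam / ((n + 1) * c)) * (downRate (fun _ => c) l m / (lam + n * c))

lemma cpuUpdate_sub (n : ℕ) (g g' h h' : (Fin N → Bool) → ℝ) (m : Fin N → Bool) :
    cpuUpdate lam c f ζ n (g - g') (h - h') m
      = cpuUpdate lam c f ζ n g h m - cpuUpdate lam c f ζ n g' h' m := by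
  simp only [cpuUpdate, Pi.sub_apply, sub_mul, sum_sub_distrib]
  ring

lemma abs_cpuUpdate_le (hlam : 0 ≤ lam) (hc : 0 ≤ c) (hf : ∀ j, 0 ≤ f j) (n : ℕ)
    (g h : (Fin N → Bool) → ℝ) (m : Fin N → Bool) :
    |cpuUpdate lam c f ζ n g h m| ≤ cpuUpdate lam c f ζ n (|g ·|) (|h ·|) m := by
  have habs {x a b : ℝ} (ha : 0 ≤ a) (hb : 0 ≤ b) : |x * a * b| = |x| * a * b := by
    rw [abs_mul, abs_mul, abs_of_nonneg ha, abs_of_nonneg hb]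
  refine (abs_add_le _ _).trans (add_le_add ?_ ?_) <;>
    refine (abs_sum_le_sum_abs _ _).trans (le_of_eq (sum_congr rfl fun l _ => habs ?_ ?_)) <;>
    first
    | positivity
    | exact div_nonneg (upRate_nonneg hlam hf l m) (by positivity)
    | exact div_nonneg (downRate_nonneg (fun _ => hc) l m) (by positivity)

lemma sum_sum_mul_mul_div {α β : Type*} (s : Finset α) (t : α → Finset β) (x : β → ℝ)
    (y : β → α → ℝ) (a D : ℝ) :
    ∑ m ∈ s, ∑ l ∈ t m, x l * a * (y l m / D) = (∑ m ∈ s, ∑ l ∈ t m, x l * y l m) * (a / D) := by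
  simp only [sum_mul]
  exact sum_congr rfl fun _ _ => sum_congr rfl fun _ _ => by ring

lemma sum_cpuUpdate (hlam : 0 < lam) (hc : 0 < c) (hfsum : ∑ j, f j = 1) {n : ℕ}
    (hn1 : 1 ≤ n) (hn : n < N) (g h : (Fin N → Bool) → ℝ) :
    ∑ m ∈ layer N n, cpuUpdate lam c f ζ n g h m
      = serviceProb lam c n * ∑ l ∈ layer N (n - 1), g l
        + (1 - serviceProb lam c n) * ∑ l ∈ layer N (n + 1), h l := by
  obtain ⟨n, rfl⟩ : ∃ n', n = n' + 1 := ⟨n - 1, by omega⟩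
  rw [one_sub_serviceProb hlam hc.le, serviceProb]
  simp only [cpuUpdate, sum_add_distrib, Nat.add_sub_cancel]
  rw [sum_sum_mul_mul_div, sum_sum_mul_mul_div, sum_layer_sum_mul_upRate hfsum (by omega),
    sum_layer_sum_adjLayer_mul_downRate, sum_mul_totalDown_const]
  push_cast
  field_simp

end Homogeneous

namespace IsCPUIterates

variable {N J : ℕ} {lam c : ℝ} {f : Fin J → ℝ} {ζ : Fin J → (Fin N ≃ Fin N)}
  {pI : ℕ → ℕ → (Fin N → Bool) → ℝ} {pR : ℕ → ℕ → ℕ → (Fin N → Bool) → ℝ}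

/-- The inner iteration is constant from `r = 1` on. -/
lemma eq_cpuUpdate_of_sum_eq_one (hiter : IsCPUIterates lam f ζ (fun _ => c) pI pR)
    (hlam : 0 < lam) (hc : 0 < c) (hfsum : ∑ j, f j = 1) {k n : ℕ} (hk : 2 ≤ k) (hn1 : 1 ≤ n)
    (hn : n < N) (hprev : ∑ l ∈ layer N (n - 1), pI k (n - 1) l = 1)
    (hself : ∑ l ∈ layer N n, pI (k - 1) n l = 1)
    (hnext : ∑ l ∈ layer N (n + 1), pI (k - 1) (n + 1) l = 1) {m : Fin N → Bool}
    (hm : m ∈ layer N n) :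
    pI k n m = cpuUpdate lam c f ζ n (pI k (n - 1)) (pI (k - 1) (n + 1)) m := by
  obtain ⟨-, -, -, -, -, -, -, hinit, hrec, hlim⟩ := hiter
  have hnN : n ≤ N - 1 := by omega
  have hsweep (r : ℕ) (hr : ∑ l ∈ layer N n, pR k n r l = 1) (m : Fin N → Bool)
      (hm : m ∈ layer N n) :
      pR k n (r + 1) m = cpuUpdate lam c f ζ n (pI k (n - 1)) (pI (k - 1) (n + 1)) m := by
    rw [hrec k hk n hn1 hnN (r + 1) (by omega) m hm, Nat.add_sub_cancel, muR, lamI, lamI, muI,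
      sum_mul_totalDown_const, sum_mul_totalUp hfsum (by omega), sum_mul_totalUp hfsum hn,
      sum_mul_totalDown_const, hr, hprev, hself, hnext,
      totalUp_eq hfsum (exists_false_of_wt_lt (mem_layer.mp hm ▸ hn)), totalDown_const,
      mem_layer.mp hm]
    simp only [one_mul, Nat.cast_add, Nat.cast_one]
    rfl
  have hsum (r : ℕ) : ∑ l ∈ layer N n, pR k n r l = 1 := by
    induction r with
    | zero => rw [sum_congr rfl fun m hm => hinit k hk n hn1 hnN m hm, hself]
    | succ r ih =>
      rw [sum_congr rfl (hsweep r ih), sum_cpuUpdate hlam hc hfsum hn1 hn, hprev, hnext]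
      ring
  refine tendsto_nhds_unique (hlim k hk n hn1 hnN m hm) (tendsto_const_nhds.congr' ?_)
  filter_upwards [eventually_ge_atTop 1] with r hr
  obtain ⟨r, rfl⟩ := Nat.exists_eq_add_of_le' hr
  exact (hsweep r (hsum r) m hm).symm

lemma sum_layer_eq_one (hiter : IsCPUIterates lam f ζ (fun _ => c) pI pR) (hlam : 0 < lam)
    (hc : 0 < c) (hfsum : ∑ j, f j = 1) {k : ℕ} (hk : 1 ≤ k) {n : ℕ} (hn : n ≤ N) :
    ∑ m ∈ layer N n, pI k n m = 1 := by
  obtain ⟨-, hfirst, -, hempty, hfull, -⟩ := id hiter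
  induction k, hk using Nat.le_induction generalizing n with
  | base =>
    rw [sum_layer_of_forall_eq (hfirst n hn)]
    field_simp [(Nat.choose_pos hn).ne']
  | succ k hk ih =>
    induction n with
    | zero => simp [sum_layer_of_forall_eq (hempty (k + 1) (by omega))]
    | succ n ihn =>
      rcases hn.lt_or_eq with hlt | rfl
      · rw [sum_congr rfl fun m hm => hiter.eq_cpuUpdate_of_sum_eq_one hlam hc hfsum
          (by omega) (by omega) hlt (ihn (by omega)) (ih hn) (ih (by omega)) hm,
          sum_cpuUpdate hlam hc hfsum (by omega) hlt, Nat.add_sub_cancel, ihn (by omega),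
          Nat.add_sub_cancel, ih (by omega)]
        ring
      · simp [sum_layer_of_forall_eq (hfull (k + 1) (by omega))]

lemma eq_cpuUpdate (hiter : IsCPUIterates lam f ζ (fun _ => c) pI pR) (hlam : 0 < lam)
    (hc : 0 < c) (hfsum : ∑ j, f j = 1) {k n : ℕ} (hk : 2 ≤ k) (hn1 : 1 ≤ n) (hn : n < N)
    {m : Fin N → Bool} (hm : m ∈ layer N n) :
    pI k n m = cpuUpdate lam c f ζ n (pI k (n - 1)) (pI (k - 1) (n + 1)) m :=
  hiter.eq_cpuUpdate_of_sum_eq_one hlam hc hfsum hk hn1 hn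
    (hiter.sum_layer_eq_one hlam hc hfsum (by omega) (by omega))
    (hiter.sum_layer_eq_one hlam hc hfsum (by omega) hn.le)
    (hiter.sum_layer_eq_one hlam hc hfsum (by omega) hn) hm

end IsCPUIterates

/-- Sweeping upward from layer `0` gives `L (k + 1) n ≤ (1 - ∏_{0 < j ≤ n} a j) · φ ^ k · M`,
where `φ = 1 - ∏_{0 < j < N} a j`. -/
theorem le_pow_mul_of_sweep_recursion {N : ℕ} {a : ℕ → ℝ} (ha0 : ∀ j, 0 ≤ a j)
    (ha1 : ∀ j, a j ≤ 1) {L : ℕ → ℕ → ℝ} {M : ℝ} (hM : 0 ≤ M) (hinit : ∀ n ≤ N, L 0 n ≤ M)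
    (hbot : ∀ k, L (k + 1) 0 = 0) (htop : ∀ k, L (k + 1) N = 0)
    (hrec : ∀ k n, 1 ≤ n → n < N →
      L (k + 1) n ≤ a n * L (k + 1) (n - 1) + (1 - a n) * L k (n + 1))
    (k : ℕ) {n : ℕ} (hn : n ≤ N) : L k n ≤ (1 - ∏ j ∈ Icc 1 (N - 1), a j) ^ k * M := by
  induction k generalizing n with
  | zero => simpa using hinit n hn
  | succ k ih =>
    set φ := 1 - ∏ j ∈ Icc 1 (N - 1), a j with hφ_def
    have hφ : 0 ≤ φ := sub_nonneg.mpr (prod_le_one (fun j _ => ha0 j) fun j _ => ha1 j)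
    have hX : 0 ≤ φ ^ k * M := by positivity
    have hsweep (n : ℕ) (hn : n < N) :
        L (k + 1) n ≤ (1 - ∏ j ∈ Icc 1 n, a j) * (φ ^ k * M) := by
      induction n with
      | zero => simp [hbot]
      | succ n ihn =>
        have ha1' : 0 ≤ 1 - a (n + 1) := sub_nonneg.mpr (ha1 _)
        calc L (k + 1) (n + 1)
            ≤ a (n + 1) * L (k + 1) n + (1 - a (n + 1)) * L k (n + 1 + 1) :=
              hrec k (n + 1) (by omega) hn
          _ ≤ a (n + 1) * ((1 - ∏ j ∈ Icc 1 n, a j) * (φ ^ k * M))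
                + (1 - a (n + 1)) * (φ ^ k * M) := by
              gcongr
              exacts [ha0 _, ihn (by omega), ih (by omega)]
          _ = (1 - ∏ j ∈ Icc 1 (n + 1), a j) * (φ ^ k * M) := by
              rw [prod_Icc_succ_top (by omega)]
              ring
    rcases hn.lt_or_eq with hlt | rfl
    · have hprod : ∏ j ∈ Icc 1 (N - 1), a j ≤ ∏ j ∈ Icc 1 n, a j :=
        prod_le_prod_of_subset_of_le_one (Icc_subset_Icc_right (by omega))
          (fun j _ => ha0 j) fun j _ _ => ha1 j
      calc L (k + 1) n ≤ (1 - ∏ j ∈ Icc 1 n, a j) * (φ ^ k * M) := hsweep n hlt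
        _ ≤ φ * (φ ^ k * M) := by gcongr; linarith
        _ = φ ^ (k + 1) * M := by ring
    · rw [htop]
      positivity

noncomputable def layerDist {N : ℕ} (pI : ℕ → ℕ → (Fin N → Bool) → ℝ) (k n : ℕ) : ℝ :=
  ∑ m ∈ layer N n, |pI (k + 1) n m - pI k n m|

lemma layerDist_nonneg {N : ℕ} (pI : ℕ → ℕ → (Fin N → Bool) → ℝ) (k n : ℕ) :
    0 ≤ layerDist pI k n :=
  sum_nonneg fun _ _ => abs_nonneg _

lemma abs_sub_le_layerDist {N : ℕ} (pI : ℕ → ℕ → (Fin N → Bool) → ℝ) {k n : ℕ}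
    {m : Fin N → Bool} (hm : m ∈ layer N n) : |pI (k + 1) n m - pI k n m| ≤ layerDist pI k n :=
  single_le_sum (f := fun m => |pI (k + 1) n m - pI k n m|) (fun _ _ => abs_nonneg _) hm

namespace IsCPUIterates

variable {N J : ℕ} {lam c : ℝ} {f : Fin J → ℝ} {ζ : Fin J → (Fin N ≃ Fin N)} {ν : Fin N → ℝ}
  {pI : ℕ → ℕ → (Fin N → Bool) → ℝ} {pR : ℕ → ℕ → ℕ → (Fin N → Bool) → ℝ}

lemma layerDist_zero (hiter : IsCPUIterates lam f ζ ν pI pR) {k : ℕ} (hk : 1 ≤ k) :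
    layerDist pI k 0 = 0 := by
  obtain ⟨-, -, -, hempty, -⟩ := hiter
  exact sum_eq_zero fun m hm => by
    rw [hempty (k + 1) (by omega) m hm, hempty k hk m hm, sub_self, abs_zero]

lemma layerDist_top (hiter : IsCPUIterates lam f ζ ν pI pR) {k : ℕ} (hk : 1 ≤ k) :
    layerDist pI k N = 0 := by
  obtain ⟨-, -, -, -, hfull, -⟩ := hiter
  exact sum_eq_zero fun m hm => by
    rw [hfull (k + 1) (by omega) m hm, hfull k hk m hm, sub_self, abs_zero]

lemma layerDist_le (hiter : IsCPUIterates lam f ζ (fun _ => c) pI pR) (hlam : 0 < lam)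
    (hc : 0 < c) (hf : ∀ j, 0 ≤ f j) (hfsum : ∑ j, f j = 1) {k n : ℕ} (hk : 2 ≤ k)
    (hn1 : 1 ≤ n) (hn : n < N) :
    layerDist pI k n ≤ serviceProb lam c n * layerDist pI k (n - 1)
      + (1 - serviceProb lam c n) * layerDist pI (k - 1) (n + 1) := by
  obtain ⟨k, rfl⟩ : ∃ k', k = k' + 1 := ⟨k - 1, by omega⟩
  calc layerDist pI (k + 1) n
      = ∑ m ∈ layer N n, |cpuUpdate lam c f ζ n (pI (k + 1 + 1) (n - 1) - pI (k + 1) (n - 1))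
          (pI (k + 1) (n + 1) - pI k (n + 1)) m| :=
        sum_congr rfl fun m hm => by
          rw [cpuUpdate_sub, hiter.eq_cpuUpdate hlam hc hfsum (by omega) hn1 hn hm,
            hiter.eq_cpuUpdate hlam hc hfsum hk hn1 hn hm, Nat.add_sub_cancel, Nat.add_sub_cancel]
    _ ≤ ∑ m ∈ layer N n, cpuUpdate lam c f ζ n
          (fun l => |pI (k + 1 + 1) (n - 1) l - pI (k + 1) (n - 1) l|)
          (fun l => |pI (k + 1) (n + 1) l - pI k (n + 1) l|) m :=
        sum_le_sum fun m _ => abs_cpuUpdate_le hlam.le hc.le hf n _ _ m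
    _ = _ := sum_cpuUpdate hlam hc hfsum hn1 hn _ _

end IsCPUIterates

theorem cpu_homogeneous_geometric_convergence_general
    {N J : ℕ} (hN : 2 ≤ N)
    (lam : ℝ) (hlam : 0 < lam)
    (f : Fin J → ℝ) (hf : ∀ j, 0 ≤ f j) (hfsum : ∑ j, f j = 1)
    (ν : Fin N → ℝ)
    (ζ : Fin J → (Fin N ≃ Fin N))
    (pI : ℕ → ℕ → (Fin N → Bool) → ℝ) (pR : ℕ → ℕ → ℕ → (Fin N → Bool) → ℝ)
    (hiter : IsCPUIterates lam f ζ ν pI pR)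
    (nu0 : ℝ) (hnu0 : 0 < nu0) (hhom : ∀ i, ν i = nu0) :
    ∃ φ : ℝ, 0 < φ ∧ φ < 1 ∧
      ∃ δ : ℝ, 0 < δ ∧
        (∀ k, 1 ≤ k → ∀ n ≤ N, ∀ m ∈ layer N n,
          |pI (k + 1) n m - pI k n m| ≤ φ ^ k * δ) ∧
        (∀ n ≤ N, ∀ m ∈ layer N n,
          Filter.Tendsto (fun k => |pI (k + 1) n m - pI k n m|) Filter.atTop (nhds 0)) := by
  obtain rfl : ν = fun _ => nu0 := funext hhom
  set φ := 1 - ∏ j ∈ Icc 1 (N - 1), serviceProb lam nu0 j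
  have hφ0 : 0 < φ := sub_pos.mpr (prod_serviceProb_lt_one hlam hnu0.le (by omega))
  have hφ1 : φ < 1 := sub_lt_self _ (prod_serviceProb_pos hlam hnu0 _)
  set M := ∑ n ∈ range (N + 1), layerDist pI 1 n
  have hM : 0 ≤ M := sum_nonneg fun n _ => layerDist_nonneg pI 1 n
  have hdist (k : ℕ) {n : ℕ} (hn : n ≤ N) : layerDist pI (k + 1) n ≤ φ ^ k * M :=
    le_pow_mul_of_sweep_recursion (L := fun k n => layerDist pI (k + 1) n)
      (serviceProb_nonneg hlam.le hnu0.le) (fun j => (serviceProb_lt_one hlam hnu0.le j).le)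
      hM (fun n hn => single_le_sum (fun n _ => layerDist_nonneg pI 1 n) (by simpa using hn))
      (fun k => hiter.layerDist_zero (by omega)) (fun k => hiter.layerDist_top (by omega))
      (fun k n hn1 hn => hiter.layerDist_le hlam hnu0 hf hfsum (by omega) hn1 hn) k hn
  have hbound (k : ℕ) (hk : 1 ≤ k) (n : ℕ) (hn : n ≤ N) (m : Fin N → Bool)
      (hm : m ∈ layer N n) : |pI (k + 1) n m - pI k n m| ≤ φ ^ k * ((M + 1) / φ) := by
    obtain ⟨k, rfl⟩ := Nat.exists_eq_add_of_le' hk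
    calc |pI (k + 1 + 1) n m - pI (k + 1) n m| ≤ layerDist pI (k + 1) n :=
          abs_sub_le_layerDist pI hm
      _ ≤ φ ^ k * M := hdist k hn
      _ ≤ φ ^ k * (M + 1) := by gcongr; linarith
      _ = φ ^ (k + 1) * ((M + 1) / φ) := by field_simp; ring
  refine ⟨φ, hφ0, hφ1, (M + 1) / φ, by positivity, hbound, fun n hn m hm => ?_⟩
  refine squeeze_zero' (Eventually.of_forall fun k => abs_nonneg _)
    ((eventually_ge_atTop 1).mono fun k hk => hbound k hk n hn m hm) ?_
  simpa using (tendsto_pow_atTop_nhds_zero_of_lt_one hφ0.le hφ1).mul_const ((M + 1) / φ)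

/-- Corollary (homogeneous setting), part 2: geometric convergence. -/
theorem cpu_homogeneous_geometric_convergence
    {N J : ℕ} (hN : 2 ≤ N) (hJ : 1 ≤ J)
    (lam : ℝ) (hlam : 0 < lam)
    (f : Fin J → ℝ) (hf : ∀ j, 0 ≤ f j) (hfsum : ∑ j, f j = 1)
    (ν : Fin N → ℝ) (hν : ∀ i, 0 < ν i)
    (ζ : Fin J → (Fin N ≃ Fin N))
    (pI : ℕ → ℕ → (Fin N → Bool) → ℝ) (pR : ℕ → ℕ → ℕ → (Fin N → Bool) → ℝ)
    (hiter : IsCPUIterates lam f ζ ν pI pR)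
    (nu0 : ℝ) (hnu0 : 0 < nu0) (hhom : ∀ i, ν i = nu0) :
    ∃ φ : ℝ, 0 < φ ∧ φ < 1 ∧
      ∃ δ : ℝ, 0 < δ ∧
        (∀ k, 1 ≤ k → ∀ n ≤ N, ∀ m ∈ layer N n,
          |pI (k + 1) n m - pI k n m| ≤ φ ^ k * δ) ∧
        (∀ n ≤ N, ∀ m ∈ layer N n,
          Filter.Tendsto (fun k => |pI (k + 1) n m - pI k n m|) Filter.atTop (nhds 0)) :=
  cpu_homogeneous_geometric_convergence_general hN lam hlam f hf hfsum ν ζ pI pR hiter nu0 hnu0 hhom
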